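/- arXiv:1702.08176 — 7 statements merged into one kernel-verified Lean document; each statement's English description precedes it below -/
import Mathlib

section
/- Let D be a delivery schedule satisfying MS-Ordering and Termination-2. Then the prefix unions of delivered sets are totally ordered by inclusion: for all processes i, j and all indices x, y, either ⋃_{k ≤ x} D i k ⊆ ⋃_{l ≤ y} D j l or ⋃_{l ≤ y} D j l ⊆ ⋃_{k ≤ x} D i k. (This is the Containment property of SCD-broadcast.) -/
/-- Containment property of SCD-broadcast: under MS-Ordering and Termination-2,
the prefix unions of delivered message sets are totally ordered by inclusion. -/
theorem scd_containment {M I : Type*} (D : I → ℕ → Set M)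
    (msOrd : ∀ (i j : I) (m m' : M) (k k' l l' : ℕ),
      k < k' → m ∈ D i k → m' ∈ D i k' →
      l < l' → m' ∈ D j l → m ∉ D j l')
    (term2 : ∀ (i j : I) (m : M) (k : ℕ), m ∈ D i k → ∃ l, m ∈ D j l) :
    ∀ (i j : I) (x y : ℕ),
      (⋃ k ≤ x, D i k) ⊆ (⋃ l ≤ y, D j l) ∨
      (⋃ l ≤ y, D j l) ⊆ (⋃ k ≤ x, D i k) := by
  intro i j x y
  by_contra h
  push_neg at h
  obtain ⟨h1, h2⟩ := h
  rw [Set.not_subset] at h1 h2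
  obtain ⟨m, hm1, hm2⟩ := h1
  obtain ⟨m', hm'1, hm'2⟩ := h2
  simp only [Set.mem_iUnion] at hm1 hm2 hm'1 hm'2
  obtain ⟨k, hk, hmk⟩ := hm1
  obtain ⟨l, hl, hml⟩ := hm'1
  obtain ⟨l', hml'⟩ := term2 i j m k hmk
  obtain ⟨k', hmk'⟩ := term2 j i m' l hml
  have hl' : y < l' := by
    by_contra hle
    exact hm2 ⟨l', Nat.le_of_not_lt hle, hml'⟩
  have hk' : x < k' := by
    by_contra hle
    exact hm'2 ⟨k', Nat.le_of_not_lt hle, hmk'⟩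
  exact msOrd i j m m' k k' l l' (lt_of_le_of_lt hk hk') hmk hmk'
    (lt_of_le_of_lt hl hl') hml hml'
end

section
/- Let D be a delivery schedule satisfying MS-Ordering and Termination-2, and let R be the associated local-precedence relation. Then the transitive closure of R is position-monotone at every process: if m is related to m' by the transitive closure of R, then for every process j and all indices l, l' with m ∈ D j l and m' ∈ D j l', one has l ≤ l'. -/
/-- Under MS-Ordering and Termination-2, the transitive closure of the
local-precedence relation R is position-monotone at every process. -/
theorem scd_transGen_position_monotone {M I : Type*} (D : I → ℕ → Set M)
    (msOrd : ∀ (i j : I) (m m' : M) (k k' l l' : ℕ),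
      k < k' → m ∈ D i k → m' ∈ D i k' →
      l < l' → m' ∈ D j l → m ∉ D j l')
    (term2 : ∀ (i j : I) (m : M) (k : ℕ), m ∈ D i k → ∃ l, m ∈ D j l)
    (R : M → M → Prop)
    (hR : ∀ m m', R m m' ↔
      ∃ (i : I) (k k' : ℕ), k < k' ∧ m ∈ D i k ∧ m' ∈ D i k') :
    ∀ m m', Relation.TransGen R m m' →
      ∀ (j : I) (l l' : ℕ), m ∈ D j l → m' ∈ D j l' → l ≤ l' := by
  have base : ∀ m m', R m m' → ∀ (j : I) (l l' : ℕ),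
      m ∈ D j l → m' ∈ D j l' → l ≤ l' := by
    intro m m' h j l l' hm hm'
    obtain ⟨i, k, k', hkk, hik, hik'⟩ := (hR m m').1 h
    by_contra hlt
    exact msOrd i j m m' k k' l' l hkk hik hik' (Nat.lt_of_not_le hlt) hm' hm
  intro m m' h
  induction h with
  | single h => exact base _ _ h
  | tail _ hbc ih =>
    intro j l l' hm hm'
    obtain ⟨i, k, k', hkk, hik, hik'⟩ := (hR _ _).1 hbc
    obtain ⟨lb, hb⟩ := term2 i j _ k hik
    exact le_trans (ih j l lb hm hb) (base _ _ hbc j lb l' hb hm')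
end

section
/- Let D be a delivery schedule satisfying MS-Ordering and Termination-2, and let R be the associated local-precedence relation. Then the transitive closure of R is irreflexive; consequently, the transitive closure of R is a strict partial order on M (the union of the local delivery orders of all processes contains no cycle). -/
/-- Under MS-Ordering and Termination-2, the transitive closure of the
local-precedence relation R is irreflexive, hence a strict partial order
(irreflexive and transitive): the union of the local delivery orders has no cycle. -/
theorem scd_transGen_strict_partial_order {M I : Type*} (D : I → ℕ → Set M)
    (msOrd : ∀ (i j : I) (m m' : M) (k k' l l' : ℕ),
      k < k' → m ∈ D i k → m' ∈ D i k' →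
      l < l' → m' ∈ D j l → m ∉ D j l')
    (term2 : ∀ (i j : I) (m : M) (k : ℕ), m ∈ D i k → ∃ l, m ∈ D j l)
    (R : M → M → Prop)
    (hR : ∀ m m', R m m' ↔
      ∃ (i : I) (k k' : ℕ), k < k' ∧ m ∈ D i k ∧ m' ∈ D i k') :
    Irreflexive (Relation.TransGen R) ∧ Transitive (Relation.TransGen R) := by
  -- a message is delivered at most once by each process
  have uniq : ∀ (j : I) (m : M) (a b : ℕ), m ∈ D j a → m ∈ D j b → a = b := by
    intro j m a b ha hb
    rcases lt_trichotomy a b with h | h | h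
    · exact absurd hb (msOrd j j m m a b a b h ha hb h ha)
    · exact h
    · exact absurd ha (msOrd j j m m b a b a h hb ha h hb)
  -- one R-step is weakly monotone in delivery indices at every process
  have mono : ∀ (x y : M) (j : I) (a b : ℕ), R x y → x ∈ D j a → y ∈ D j b → a ≤ b := by
    intro x y j a b hxy ha hb
    rcases (hR x y).1 hxy with ⟨i, k, k', hkk, hx, hy⟩
    by_contra h
    push_neg at h
    exact msOrd i j x y k k' b a hkk hx hy h hb ha
  -- transitive closure is weakly monotone in delivery indices at every process
  have monoT : ∀ (x y : M), Relation.TransGen R x y →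
      ∀ (j : I) (a b : ℕ), x ∈ D j a → y ∈ D j b → a ≤ b := by
    intro x y h
    induction h with
    | single hxy => intro j a b ha hb; exact mono _ _ j a b hxy ha hb
    | tail _ hyz ih =>
      intro j a b ha hb
      rename_i y' z' _
      rcases (hR y' z').1 hyz with ⟨i, k, k', _, hy, _⟩
      rcases term2 i j y' k hy with ⟨c, hc⟩
      exact le_trans (ih j a c ha hc) (mono _ _ j c b hyz hc hb)
  constructor
  · intro m h
    cases h with
    | single hmm =>
      rcases (hR m m).1 hmm with ⟨i, k, k', hkk, h1, h2⟩
      exact absurd (uniq i m k k' h1 h2) hkk.ne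
    | tail hmb hbm =>
      rename_i b
      rcases (hR b m).1 hbm with ⟨i, k, k', hkk, hb, hm⟩
      exact absurd (monoT m b hmb i k' k hm hb) hkk.not_ge
  · exact fun _ _ _ => Relation.TransGen.trans
end

section
/- Let D be a delivery schedule satisfying Integrity, MS-Ordering and Termination-2, and let R be the associated local-precedence relation. Then there exists a strict total order T on M that complies with all local delivery orders, i.e., R m m' implies T m m' for all m, m'. (A total order on the whole set of messages complies with the partial order obtained as the union of the per-process delivery orders.) -/
/-- Under Integrity, MS-Ordering and Termination-2, there exists a strict total
order on the whole set of messages that complies with all local delivery orders. -/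
theorem scd_exists_compliant_total_order {M I : Type*} (D : I → ℕ → Set M)
    (integrity : ∀ (i : I) (m : M) (k k' : ℕ), m ∈ D i k → m ∈ D i k' → k = k')
    (msOrd : ∀ (i j : I) (m m' : M) (k k' l l' : ℕ),
      k < k' → m ∈ D i k → m' ∈ D i k' →
      l < l' → m' ∈ D j l → m ∉ D j l')
    (term2 : ∀ (i j : I) (m : M) (k : ℕ), m ∈ D i k → ∃ l, m ∈ D j l)
    (R : M → M → Prop)
    (hR : ∀ m m', R m m' ↔
      ∃ (i : I) (k k' : ℕ), k < k' ∧ m ∈ D i k ∧ m' ∈ D i k') :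
    ∃ T : M → M → Prop,
      (∀ m, ¬ T m m) ∧
      (∀ a b c, T a b → T b c → T a c) ∧
      (∀ a b, a ≠ b → T a b ∨ T b a) ∧
      (∀ m m', R m m' → T m m') := by
  -- R is irreflexive
  have hirr : ∀ m, ¬ R m m := by
    intro m hm
    obtain ⟨i, k, k', hkk, hk, hk'⟩ := (hR m m).1 hm
    exact absurd (integrity i m k k' hk hk') hkk.ne
  -- R is transitive
  have htrans : ∀ a b c, R a b → R b c → R a c := by
    intro a b c hab hbc
    obtain ⟨i, k, k', hkk, hak, hbk'⟩ := (hR a b).1 hab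
    obtain ⟨j, l, l', hll, hbl, hcl'⟩ := (hR b c).1 hbc
    obtain ⟨t, hct⟩ := term2 j i c l' hcl'
    rcases lt_or_ge t k' with ht | ht
    · exact absurd hbk' (msOrd j i b c l l' t k' hll hbl hcl' ht hct)
    · exact (hR a c).2 ⟨i, k, t, lt_of_lt_of_le hkk ht, hak, hct⟩
  -- partial order from R
  let le : M → M → Prop := fun a b => a = b ∨ R a b
  have hpo : IsPartialOrder M le :=
    { refl := fun a => Or.inl rfl
      trans := by
        rintro a b c (rfl | hab) (rfl | hbc)
        · exact Or.inl rfl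
        · exact Or.inr hbc
        · exact Or.inr hab
        · exact Or.inr (htrans a b c hab hbc)
      antisymm := by
        rintro a b (rfl | hab) (h | hba)
        · rfl
        · rfl
        · exact h.symm
        · exact absurd (htrans a b a hab hba) (hirr a) }
  obtain ⟨s, hs, hsub⟩ := @extend_partialOrder M le hpo
  refine ⟨fun a b => s a b ∧ a ≠ b, ?_, ?_, ?_, ?_⟩
  · rintro m ⟨_, h⟩; exact h rfl
  · rintro a b c ⟨hab, hne⟩ ⟨hbc, hne'⟩
    refine ⟨hs.trans a b c hab hbc, fun h => ?_⟩
    subst h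
    exact hne (hs.antisymm a b hab hbc)
  · intro a b hne
    rcases hs.total a b with h | h
    · exact Or.inl ⟨h, hne⟩
    · exact Or.inr ⟨h, hne.symm⟩
  · intro m m' hmm
    refine ⟨hsub m m' (Or.inr hmm), fun h => ?_⟩
    subst h; exact hirr m hmm
end

section
/- Let D be a delivery schedule satisfying MS-Ordering in which every delivered set contains at most one message (for all i and k, the set D i k has at most one element). Then any two processes deliver their common messages in the same order: if m ∈ D i k and m' ∈ D i k' with k < k' and m ≠ m', and if m ∈ D j l and m' ∈ D j l' for another process j, then l < l'. (SCD-broadcast restricted to singleton deliveries provides totally ordered delivery.) -/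
/-- SCD-broadcast restricted to singleton deliveries provides totally ordered
delivery: if every delivered set has at most one element, any two processes
deliver their common messages in the same order. -/
theorem scd_singleton_total_order {M I : Type*} (D : I → ℕ → Set M)
    (msOrd : ∀ (i j : I) (m m' : M) (k k' l l' : ℕ),
      k < k' → m ∈ D i k → m' ∈ D i k' →
      l < l' → m' ∈ D j l → m ∉ D j l')
    (hsingle : ∀ (i : I) (k : ℕ), (D i k).Subsingleton) :
    ∀ (i j : I) (m m' : M) (k k' l l' : ℕ),
      k < k' → m ∈ D i k → m' ∈ D i k' → m ≠ m' →
      m ∈ D j l → m' ∈ D j l' → l < l' := by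
  intro i j m m' k k' l l' hkk hmk hmk' hne hml hml'
  rcases lt_trichotomy l l' with h | h | h
  · exact h
  · exact absurd (hsingle j l hml (h ▸ hml')) hne
  · exact absurd hml (msOrd i j m m' k k' l' l hkk hmk hmk' h hml')
end

section
/- The reflexive-transitive closure of →lin is antisymmetric: if op is related to op' and op' is related to op by the reflexive-transitive closure of →lin, then op = op'. (This is the core antisymmetry argument in the proof of Lemma 5, showing the linearization relation of the snapshot algorithm has a partial-order closure.) -/
/-- Core antisymmetry argument of Lemma 5: the reflexive-transitive closure of
the linearization relation `→lin` of the snapshot algorithm is antisymmetric. -/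
theorem lin_reflTransGen_antisymm {Op ρ A B : Type*} [LinearOrder A] [LinearOrder B]
    (W : Op → Prop) (reg : Op → ρ) (prec : Op → Op → Prop)
    (hirr : ∀ op, ¬ prec op op)
    (htrans : ∀ a b c, prec a b → prec b c → prec a c)
    (tsa : Op → A) (ts : Op → B)
    (h1 : ∀ op op', prec op op' → tsa op ≤ tsa op')
    (h2 : ∀ op op', prec op op' → W op' → tsa op < tsa op')
    (lin : Op → Op → Prop)
    (hlin : ∀ op op', lin op op' ↔
      (prec op op' ∨ tsa op < tsa op' ∨
       (tsa op = tsa op' ∧ W op ∧ ¬ W op') ∨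
       (tsa op = tsa op' ∧ W op ∧ W op' ∧ reg op = reg op' ∧ ts op < ts op'))) :
    ∀ op op', Relation.ReflTransGen lin op op' →
      Relation.ReflTransGen lin op' op → op = op' := by
  classical
  set s : Op → Op → Prop := fun a b =>
    (W a ∧ W b ∧ ts a < ts b) ∨ (W a ∧ ¬ W b) ∨ (¬ W a ∧ ¬ W b ∧ prec a b) with hs
  set r : Op → Op → Prop := fun a b => tsa a < tsa b ∨ (tsa a = tsa b ∧ s a b) with hr
  have hsub : ∀ a b, lin a b → r a b := by
    intro a b hab
    rcases (hlin a b).1 hab with h | h | ⟨he, hw, hnw⟩ | ⟨he, hw, hw', _, hts⟩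
    · rcases lt_or_eq_of_le (h1 a b h) with hlt | he
      · exact Or.inl hlt
      · refine Or.inr ⟨he, ?_⟩
        have hnb : ¬ W b := fun hwb => absurd (h2 a b h hwb) (by simp [he])
        by_cases hwa : W a
        · exact Or.inr (Or.inl ⟨hwa, hnb⟩)
        · exact Or.inr (Or.inr ⟨hwa, hnb, h⟩)
    · exact Or.inl h
    · exact Or.inr ⟨he, Or.inr (Or.inl ⟨hw, hnw⟩)⟩
    · exact Or.inr ⟨he, Or.inl ⟨hw, hw', hts⟩⟩
  have hstr : ∀ a b c, s a b → s b c → s a c := by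
    intro a b c hab hbc
    rcases hab with ⟨ha, hb, hts⟩ | ⟨ha, hb⟩ | ⟨ha, hb, hp⟩ <;>
      rcases hbc with ⟨hb', hc, hts'⟩ | ⟨hb', hc⟩ | ⟨hb', hc, hp'⟩ <;>
      first
        | exact Or.inl ⟨ha, hc, lt_trans hts hts'⟩
        | exact Or.inr (Or.inl ⟨ha, hc⟩)
        | exact Or.inr (Or.inr ⟨ha, hc, htrans _ _ _ hp hp'⟩)
        | exact absurd hb' hb
        | exact absurd hb hb'
  have hsirr : ∀ a, ¬ s a a := by
    intro a h
    rcases h with ⟨_, _, h⟩ | ⟨h, h'⟩ | ⟨_, _, h⟩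
    · exact lt_irrefl _ h
    · exact h' h
    · exact hirr _ h
  have hrtr : ∀ a b c, r a b → r b c → r a c := by
    intro a b c hab hbc
    rcases hab with h | ⟨he, hsab⟩ <;> rcases hbc with h' | ⟨he', hsbc⟩
    · exact Or.inl (lt_trans h h')
    · exact Or.inl (he' ▸ h)
    · exact Or.inl (he ▸ h')
    · exact Or.inr ⟨he.trans he', hstr _ _ _ hsab hsbc⟩
  have hrirr : ∀ a, ¬ r a a := by
    intro a h
    rcases h with h | ⟨_, h⟩
    · exact lt_irrefl _ h
    · exact hsirr _ h
  have key : ∀ a b, Relation.ReflTransGen lin a b → a = b ∨ r a b := by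
    intro a b h
    induction h with
    | refl => exact Or.inl rfl
    | tail _ hcd ih =>
      rcases ih with rfl | hr
      · exact Or.inr (hsub _ _ hcd)
      · exact Or.inr (hrtr _ _ _ hr (hsub _ _ hcd))
  intro op op' h h'
  rcases key _ _ h with rfl | hr1
  · rfl
  rcases key _ _ h' with rfl | hr2
  · rfl
  exact absurd (hrtr _ _ _ hr1 hr2) (hrirr _)
end

section
/- Linearizability of the snapshot object (abstract form of Lemma 5): under the stated assumptions there exists a relation T on Op that is a strict total order (irreflexive, transitive, and total on distinct elements) such that: (i) op ≺ op' implies T op op'; and (ii) for every snapshot operation s (¬W s) and every register r there is a write w with W w, reg w = r and ts w = tsa s r such that T w s, and every write w' ≠ w with W w' and reg w' = r satisfies T w' w or T s w'. (Each snapshot returns, for each register, the value written by the last write on that register preceding it in the linearization, and the linearization respects real-time precedence.) -/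
/-!
Order the operations lexicographically by `tsa` (the arrays form a chain), then by `ts` for a
write and `⊤` for a snapshot, so that at equal arrays the writes come first in timestamp order,
and break the remaining ties by a linear extension of `≺`. Real-time precedence is respected because `≺` never decreases the array and
strictly increases it at a write. A snapshot `s` reads, on register `r`, the write `w` with
`ts w = tsa s r`: minimality of `tsa w` puts `w` before `s`; a different write `w'` on `r`
either has an array above `tsa s`, hence comes after `s`, or has `ts w' < ts w`, and then
minimality again gives `tsa w' ≤ tsa w`, so it comes before `w`.
-/

open Function

universe u

theorem IsStrictOrder.exists_injective_strictMono {α : Type u} (r : α → α → Prop)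
    [IsStrictOrder α r] :
    ∃ (L : Type u) (_ : LinearOrder L) (e : α → L), Injective e ∧ ∀ a b, r a b → e a < e b := by
  let := partialOrderOfSO r
  have hmono : StrictMono (toLinearExtension : α → LinearExtension α) :=
    toLinearExtension.monotone.strictMono_of_injective fun _ _ h => h
  exact ⟨LinearExtension α, inferInstance, toLinearExtension, fun _ _ h => h,
    fun a b hab => hmono (lt_of_le_of_ne (Or.inr hab) fun h => irrefl_of r b (h ▸ hab))⟩

theorem Prod.Lex.le_total_of_fst {α β : Type*} [PartialOrder α] [LinearOrder β] {x y : α ×ₗ β}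
    (h : (ofLex x).1 ≤ (ofLex y).1 ∨ (ofLex y).1 ≤ (ofLex x).1) : x ≤ y ∨ y ≤ x := by
  simp only [Prod.Lex.le_iff']
  by_cases heq : (ofLex x).1 = (ofLex y).1
  · exact (le_total (ofLex x).2 (ofLex y).2).imp (fun h' => ⟨heq.le, fun _ => h'⟩)
      (fun h' => ⟨heq.ge, fun _ => h'⟩)
  · exact h.imp (fun h => ⟨h, fun e => absurd e heq⟩) (fun h => ⟨h, fun e => absurd e.symm heq⟩)

section SnapshotKey

variable {Op ρ B : Type*} [LinearOrder B] {W : Op → Prop} [DecidablePred W] {reg : Op → ρ}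
  {prec : Op → Op → Prop} {ts : Op → B} {tsa : Op → ρ → B}

variable (W ts tsa) in
def snapshotKey (a : Op) : (ρ → B) ×ₗ WithTop B :=
  toLex (tsa a, if W a then (ts a : WithTop B) else ⊤)

theorem snapshotKey_le_total (h1 : ∀ op op', tsa op ≤ tsa op' ∨ tsa op' ≤ tsa op) (a b : Op) :
    snapshotKey W ts tsa a ≤ snapshotKey W ts tsa b ∨
      snapshotKey W ts tsa b ≤ snapshotKey W ts tsa a :=
  Prod.Lex.le_total_of_fst (h1 a b)

theorem snapshotKey_le_of_prec (h2 : ∀ op op', prec op op' → tsa op ≤ tsa op')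
    (h3 : ∀ op op', prec op op' → W op' → tsa op ≠ tsa op') {a b : Op} (hab : prec a b) :
    snapshotKey W ts tsa a ≤ snapshotKey W ts tsa b := by
  refine Prod.Lex.toLex_le_toLex'.2 ⟨h2 a b hab, fun heq => ?_⟩
  simp [if_neg fun hb => h3 a b hab hb heq]

theorem snapshotKey_lt_of_write_of_snapshot {w s : Op} (hw : W w) (hs : ¬W s)
    (hle : tsa w ≤ tsa s) : snapshotKey W ts tsa w < snapshotKey W ts tsa s := by
  refine Prod.Lex.toLex_lt_toLex'.2 ⟨hle, fun _ => ?_⟩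
  simp [hw, hs]

theorem snapshotKey_lt_of_ts_lt (h4 : ∀ w, W w → ts w ≤ tsa w (reg w))
    (h5 : ∀ w op, W w → ts w ≤ tsa op (reg w) → tsa w ≤ tsa op) {w w' : Op} (hw : W w)
    (hw' : W w') (hreg : reg w' = reg w) (hts : ts w' < ts w) :
    snapshotKey W ts tsa w' < snapshotKey W ts tsa w := by
  have hle : tsa w' ≤ tsa w := h5 w' w hw' <| calc
    ts w' ≤ ts w := hts.le
    _ ≤ tsa w (reg w) := h4 w hw
    _ = tsa w (reg w') := by rw [hreg]
  refine Prod.Lex.toLex_lt_toLex'.2 ⟨hle, fun _ => ?_⟩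
  simpa [hw, hw'] using hts

theorem snapshotKey_lt_or_lt_of_ts_eq_tsa (h1 : ∀ op op', tsa op ≤ tsa op' ∨ tsa op' ≤ tsa op)
    (h4 : ∀ w, W w → ts w ≤ tsa w (reg w))
    (h5 : ∀ w op, W w → ts w ≤ tsa op (reg w) → tsa w ≤ tsa op)
    (h6 : ∀ w w', W w → W w' → reg w = reg w' → ts w = ts w' → w = w')
    {s w w' : Op} (hw : W w) (hts : ts w = tsa s (reg w)) (hw' : W w') (hreg : reg w' = reg w)
    (hne : w' ≠ w) :
    snapshotKey W ts tsa w' < snapshotKey W ts tsa w ∨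
      snapshotKey W ts tsa s < snapshotKey W ts tsa w' := by
  by_cases hle : tsa w' ≤ tsa s
  · have hts_le : ts w' ≤ ts w := calc
      ts w' ≤ tsa w' (reg w') := h4 w' hw'
      _ ≤ tsa s (reg w') := hle _
      _ = ts w := by rw [hreg, hts]
    exact Or.inl <| snapshotKey_lt_of_ts_lt h4 h5 hw hw' hreg <|
      hts_le.lt_of_ne fun h => hne (h6 w' w hw' hw hreg h)
  · have hlt : tsa s < tsa w' := ((h1 w' s).resolve_left hle).lt_of_not_ge hle
    exact Or.inr (Prod.Lex.toLex_lt_toLex.2 (Or.inl hlt))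

end SnapshotKey

/-- Abstract form of Lemma 5 (linearizability of the snapshot object): there is
a strict total order on operations extending real-time precedence in which each
snapshot returns, for each register, the value of the last preceding write on
that register. -/
theorem snapshot_linearizable {Op ρ B : Type*} [LinearOrder B]
    (W : Op → Prop) (reg : Op → ρ) (prec : Op → Op → Prop)
    (hirr : ∀ op, ¬ prec op op)
    (htrans : ∀ a b c, prec a b → prec b c → prec a c)
    (ts : Op → B) (tsa : Op → ρ → B)
    (h1 : ∀ op op', tsa op ≤ tsa op' ∨ tsa op' ≤ tsa op)
    (h2 : ∀ op op', prec op op' → tsa op ≤ tsa op')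
    (h3 : ∀ op op', prec op op' → W op' → tsa op ≠ tsa op')
    (h4 : ∀ w, W w → ts w ≤ tsa w (reg w))
    (h5 : ∀ w op, W w → ts w ≤ tsa op (reg w) → tsa w ≤ tsa op)
    (h6 : ∀ w w', W w → W w' → reg w = reg w' → ts w = ts w' → w = w')
    (h7 : ∀ s, ¬ W s → ∀ r : ρ, ∃ w, W w ∧ reg w = r ∧ ts w = tsa s r) :
    ∃ T : Op → Op → Prop,
      (∀ op, ¬ T op op) ∧
      (∀ a b c, T a b → T b c → T a c) ∧
      (∀ a b, a ≠ b → T a b ∨ T b a) ∧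
      (∀ op op', prec op op' → T op op') ∧
      (∀ s, ¬ W s → ∀ r : ρ, ∃ w, W w ∧ reg w = r ∧ ts w = tsa s r ∧ T w s ∧
        ∀ w', w' ≠ w → W w' → reg w' = r → (T w' w ∨ T s w')) := by
  classical
  have : IsStrictOrder Op prec := { irrefl := hirr, trans := htrans }
  obtain ⟨L, _, e, he_inj, he⟩ := IsStrictOrder.exists_injective_strictMono prec
  let K : Op → ((ρ → B) ×ₗ WithTop B) ×ₗ L := fun a => toLex (snapshotKey W ts tsa a, e a)
  have hK_inj : Injective K := fun a b h => he_inj (congrArg (fun x => (ofLex x).2) h)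
  have hK_of_key {a b : Op} (h : snapshotKey W ts tsa a < snapshotKey W ts tsa b) : K a < K b :=
    Prod.Lex.toLex_lt_toLex.2 (Or.inl h)
  refine ⟨fun a b => K a < K b, fun a => lt_irrefl _, fun _ _ _ => lt_trans, ?_, ?_, ?_⟩
  · intro a b hne
    have hK := hK_inj.ne hne
    exact (Prod.Lex.le_total_of_fst (snapshotKey_le_total h1 a b)).imp
      (lt_of_le_of_ne · hK) (lt_of_le_of_ne · hK.symm)
  · exact fun a b hab => Prod.Lex.toLex_lt_toLex'.2
      ⟨snapshotKey_le_of_prec h2 h3 hab, fun _ => he a b hab⟩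
  · intro s hs r
    obtain ⟨w, hw, rfl, hts⟩ := h7 s hs r
    refine ⟨w, hw, rfl, hts, hK_of_key (snapshotKey_lt_of_write_of_snapshot hw hs ?_), ?_⟩
    · exact h5 w s hw hts.le
    · exact fun w' hne hw' hreg =>
        (snapshotKey_lt_or_lt_of_ts_eq_tsa h1 h4 h5 h6 hw hts hw' hreg hne).imp hK_of_key hK_of_key
end
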